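/- arXiv:2009.12526 — 2 statements merged into one kernel-verified Lean document; each statement's English description precedes it below -/
import Mathlib

section
/- Let k ≥ 2. The map g̃ : S^{2k} → S^{2k-1} defined by g̃(z,w,ζ,s) = (2·(conj z)·|w|, 1−2|w|², 2|w|ζ, 2|w|s) is a well-defined continuous map (its image lies on the unit sphere S^{2k-1}) and is nullhomotopic. -/
/-!
`g̃` depends on `w` only through `|w|`. On `S^{2k}` the points `(z, |w|, ζ, s)` contract to
`(0, 1, 0, 0)` through the points `((1-τ)z, r, (1-τ)ζ, (1-τ)s)` with `r ≥ 0` chosen to stay on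
the sphere, and `g̃` applied to this contraction is a nullhomotopy. That `g̃` lands in `S^{2k-1}` is
the identity `‖g̃ p‖² = 1 + 4|w|²(‖p‖² - 1)`.
-/

noncomputable section

/-- Points `(z, t, ζ, s) ∈ ℂ × ℝ × ℂ^{k-2} × ℝ` (ambient space of `S^{2k-1}`). -/
abbrev Pt (k : ℕ) : Type := ℂ × ℝ × (Fin (k - 2) → ℂ) × ℝ

/-- Points `(z, w, ζ, s) ∈ ℂ × ℂ × ℂ^{k-2} × ℝ` (ambient space of `S^{2k}`). -/
abbrev Pt2 (k : ℕ) : Type := ℂ × ℂ × (Fin (k - 2) → ℂ) × ℝ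

def nsq {k : ℕ} (p : Pt k) : ℝ :=
  ‖p.1‖ ^ 2 + p.2.1 ^ 2 + (∑ m, ‖p.2.2.1 m‖ ^ 2) + p.2.2.2 ^ 2

def nsq2 {k : ℕ} (p : Pt2 k) : ℝ :=
  ‖p.1‖ ^ 2 + ‖p.2.1‖ ^ 2 + (∑ m, ‖p.2.2.1 m‖ ^ 2) + p.2.2.2 ^ 2

/-- The unit sphere `S^{2k-1}`. -/
def Sph (k : ℕ) : Set (Pt k) := {p | nsq p = 1}

/-- The unit sphere `S^{2k}`. -/
def Sph2 (k : ℕ) : Set (Pt2 k) := {p | nsq2 p = 1}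

/-- The map `g̃(z, w, ζ, s) = (2·conj(z)·|w|, 1 − 2|w|², 2|w|ζ, 2|w|s)`. -/
def gTilde (k : ℕ) (p : Pt2 k) : Pt k :=
  (2 * starRingEnd ℂ p.1 * ((‖p.2.1‖ : ℝ) : ℂ),
   1 - 2 * ‖p.2.1‖ ^ 2,
   fun m => ((2 * ‖p.2.1‖ : ℝ) : ℂ) * p.2.2.1 m,
   2 * ‖p.2.1‖ * p.2.2.2)

/-- Homotopy of maps from the subspace `A ⊆ X` into the subspace `B ⊆ Y`. -/
def HtpyOn {X Y : Type} [TopologicalSpace X] [TopologicalSpace Y]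
    (A : Set X) (B : Set Y) (f g : X → Y) : Prop :=
  ∃ H : ℝ × X → Y, ContinuousOn H (Set.Icc (0 : ℝ) 1 ×ˢ A) ∧
    (∀ x ∈ A, H (0, x) = f x) ∧ (∀ x ∈ A, H (1, x) = g x) ∧
    (∀ τ ∈ Set.Icc (0 : ℝ) 1, ∀ x ∈ A, H (τ, x) ∈ B)

open Set

section Sphere

variable {k : ℕ}

theorem continuous_gTilde (k : ℕ) : Continuous (gTilde k) := by
  unfold gTilde
  fun_prop

theorem nsq_gTilde (p : Pt2 k) :
    nsq (gTilde k p) = 1 + 4 * ‖p.2.1‖ ^ 2 * (nsq2 p - 1) := by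
  obtain ⟨z, w, ζ, s⟩ := p
  simp only [nsq, nsq2, gTilde, norm_mul, Complex.norm_real, RCLike.norm_conj, Real.norm_eq_abs,
    abs_norm, mul_pow, ← Finset.mul_sum]
  norm_num
  ring

theorem mapsTo_gTilde (k : ℕ) : MapsTo (gTilde k) (Sph2 k) (Sph k) :=
  fun p (hp : nsq2 p = 1) => show nsq _ = 1 by rw [nsq_gTilde, hp]; ring

theorem gTilde_ofReal_norm (p : Pt2 k) :
    gTilde k (p.1, (‖p.2.1‖ : ℂ), p.2.2) = gTilde k p := by
  simp [gTilde]

def sphContract (k : ℕ) (τ : ℝ) (p : Pt2 k) : Pt2 k :=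
  ((1 - τ) • p.1, (√(1 - (1 - τ) ^ 2 * (1 - ‖p.2.1‖ ^ 2)) : ℂ), (1 - τ) • p.2.2.1,
    (1 - τ) * p.2.2.2)

theorem continuous_sphContract : Continuous fun q : ℝ × Pt2 k => sphContract k q.1 q.2 := by
  unfold sphContract
  fun_prop

theorem sphContract_zero (p : Pt2 k) : sphContract k 0 p = (p.1, (‖p.2.1‖ : ℂ), p.2.2) := by
  simp [sphContract]

theorem sphContract_one (p : Pt2 k) : sphContract k 1 p = (0, 1, 0, 0) := by
  simp [sphContract]

theorem mem_Sph2_sphContract {τ : ℝ} (hτ : τ ∈ Icc 0 1) {p : Pt2 k} (hp : p ∈ Sph2 k) :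
    sphContract k τ p ∈ Sph2 k := by
  obtain ⟨z, w, ζ, s⟩ := p
  change nsq2 _ = 1 at hp ⊢
  simp only [nsq2] at hp ⊢
  have hrad : 0 ≤ 1 - (1 - τ) ^ 2 * (1 - ‖w‖ ^ 2) := by
    nlinarith [hτ.1, hτ.2, sq_nonneg (1 - τ), sq_nonneg ‖w‖]
  simp only [sphContract, norm_smul, Complex.norm_real, Real.norm_eq_abs,
    abs_of_nonneg (Real.sqrt_nonneg _), Real.sq_sqrt hrad, Pi.smul_apply, mul_pow, sq_abs,
    ← Finset.mul_sum]
  linear_combination (1 - τ) ^ 2 * hp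

theorem north_mem_Sph2 : ((0, 1, 0, 0) : Pt2 k) ∈ Sph2 k := by
  simp [Sph2, nsq2]

end Sphere

theorem stmt_8_general (k : ℕ) :
    Continuous (gTilde k) ∧
    Set.MapsTo (gTilde k) (Sph2 k) (Sph k) ∧
    ∃ c ∈ Sph k, HtpyOn (Sph2 k) (Sph k) (gTilde k) (fun _ => c) := by
  refine ⟨continuous_gTilde k, mapsTo_gTilde k, gTilde k (0, 1, 0, 0),
    mapsTo_gTilde k north_mem_Sph2, fun q => gTilde k (sphContract k q.1 q.2),
    ((continuous_gTilde k).comp continuous_sphContract).continuousOn, ?_, ?_, ?_⟩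
  · intro p _
    exact (congrArg _ (sphContract_zero p)).trans (gTilde_ofReal_norm p)
  · intro p _
    exact congrArg _ (sphContract_one p)
  · intro τ hτ p hp
    exact mapsTo_gTilde k (mem_Sph2_sphContract hτ hp)

/-- the map `g̃ : S^{2k} → S^{2k-1}`,
`g̃(z,w,ζ,s) = (2 conj(z)|w|, 1−2|w|², 2|w|ζ, 2|w|s)`, is a well-defined
continuous map whose image lies on the unit sphere `S^{2k-1}`, and it is
nullhomotopic (as a map into `S^{2k-1}`). -/
theorem stmt_8 (k : ℕ) (hk : 2 ≤ k) :
    Continuous (gTilde k) ∧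
    Set.MapsTo (gTilde k) (Sph2 k) (Sph k) ∧
    ∃ c ∈ Sph k, HtpyOn (Sph2 k) (Sph k) (gTilde k) (fun _ => c) :=
  stmt_8_general k
end
end

section
/- Let k ≥ 2, let (𝒩,F) be a parametrized tube enclosing a curve in ℂ^{3k}, let U ⊆ ℂ^{3k} be an open neighborhood of F({1}×D^{2k}), and let H : U → ℂ^{3k} be a biholomorphism onto its image (holomorphic injection with holomorphic inverse). Then the slice frame map of H∘F, namely the map S^{2k-1} → V_{2k+1,3k} given by η ↦ D_ℂH(F(1,η)) · DF(1,η) (the product of the complex Jacobian matrix of H with the Jacobian of F), is homotopic to F̂_slice as maps S^{2k-1} → V_{2k+1,3k}. -/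
noncomputable section

open scoped Real

abbrev CN (k : ℕ) : Type := Fin (3 * k) → ℂ

def Disk (k : ℕ) : Set (Pt k) := {p | nsq p ≤ 1}
def dirVec (k : ℕ) (j : Fin (2 * k + 1)) : ℝ × Pt k :=
  ((if (j : ℕ) = 0 then 1 else 0),
    ((if (j : ℕ) = 1 then 1 else 0) + (if (j : ℕ) = 2 then Complex.I else 0),
     (if (j : ℕ) = 3 then (1 : ℝ) else 0),
     (fun m => (if (j : ℕ) = 2 * (m : ℕ) + 4 then 1 else 0)
        + (if (j : ℕ) = 2 * (m : ℕ) + 5 then Complex.I else 0)),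
     (if (j : ℕ) = 2 * k then (1 : ℝ) else 0)))

def Jac {k : ℕ} (F : ℝ × Pt k → CN k) (q : ℝ × Pt k) :
    Matrix (Fin (3 * k)) (Fin (2 * k + 1)) ℂ :=
  Matrix.of fun i j => fderiv ℝ F q (dirVec k j) i

def Vst (k : ℕ) : Set (Matrix (Fin (3 * k)) (Fin (2 * k + 1)) ℂ) :=
  {A | A.rank = 2 * k + 1}

def mulI (k : ℕ) : CN k →ₗ[ℝ] CN k where
  toFun v := Complex.I • v
  map_add' v w := smul_add _ v w
  map_smul' c v := (smul_comm c Complex.I v).symm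

def tangentSpan {k : ℕ} (F : ℝ × Pt k → CN k) (q : ℝ × Pt k) : Submodule ℝ (CN k) :=
  LinearMap.range (fderiv ℝ F q).toLinearMap

def crPlane {k : ℕ} (F : ℝ × Pt k → CN k) (q : ℝ × Pt k) : Submodule ℝ (CN k) :=
  tangentSpan F q ⊓ (tangentSpan F q).map (mulI k)

structure IsAdmissibleParam (k : ℕ) (N : Set (CN k)) (F : ℝ × Pt k → CN k) : Prop where
  smooth : ∃ U : Set (ℝ × Pt k), IsOpen U ∧ Set.univ ×ˢ Disk k ⊆ U ∧ ContDiffOn ℝ (⊤ : ℕ∞) F U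
  periodic : ∀ θ η, F (θ + 2 * π, η) = F (θ, η)
  image_eq : F '' (Set.univ ×ˢ Disk k) = N
  inj : ∀ θ θ' : ℝ, ∀ η ∈ Disk k, ∀ η' ∈ Disk k,
    F (θ, η) = F (θ', η') → η = η' ∧ ∃ n : ℤ, θ' = θ + 2 * π * n
  immersion : ∀ θ : ℝ, ∀ η ∈ Disk k, Function.Injective (fderiv ℝ F (θ, η))
  totreal : ∀ θ : ℝ, ∀ η ∈ Disk k, η ≠ 0 → (Jac F (θ, η)).rank = 2 * k + 1
  crconst : ∃ d : ℕ, ∀ θ : ℝ, Module.finrank ℝ (crPlane F (θ, (0 : Pt k))) = 2 * d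

def CircSphHtpy (k : ℕ) {Y : Type} [TopologicalSpace Y] (B : Set Y)
    (f g : ℝ × Pt k → Y) : Prop :=
  ∃ H : ℝ × ℝ × Pt k → Y,
    ContinuousOn H (Set.Icc (0 : ℝ) 1 ×ˢ Set.univ ×ˢ Sph k) ∧
    (∀ τ θ η, H (τ, θ + 2 * π, η) = H (τ, θ, η)) ∧
    (∀ θ : ℝ, ∀ η ∈ Sph k, H (0, θ, η) = f (θ, η)) ∧
    (∀ θ : ℝ, ∀ η ∈ Sph k, H (1, θ, η) = g (θ, η)) ∧
    (∀ τ ∈ Set.Icc (0 : ℝ) 1, ∀ θ : ℝ, ∀ η ∈ Sph k, H (τ, θ, η) ∈ B)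

def Ann (k : ℕ) : Set (Pt k) := {p | 1 ≤ nsq p ∧ nsq p ≤ 4}

def TRCCobordant (k : ℕ) (N₁ N₂ : Set (CN k)) (F₁ F₂ : ℝ × Pt k → CN k) : Prop :=
  Disjoint N₁ N₂ ∧
  ∃ δ : ℝ, 0 < δ ∧ δ < 1 / 2 ∧
  ∃ G : ℝ × Pt k → CN k, ∃ U : Set (ℝ × Pt k), IsOpen U ∧ Set.univ ×ˢ Ann k ⊆ U ∧
    ContDiffOn ℝ (⊤ : ℕ∞) G U ∧
    (∀ θ η, G (θ + 2 * π, η) = G (θ, η)) ∧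
    (∀ θ θ' : ℝ, ∀ η ∈ Ann k, ∀ η' ∈ Ann k,
      G (θ, η) = G (θ', η') → η = η' ∧ ∃ n : ℤ, θ' = θ + 2 * π * n) ∧
    (∀ θ : ℝ, ∀ η ∈ Ann k, Function.Injective (fderiv ℝ G (θ, η))) ∧
    (∀ θ : ℝ, ∀ η ∈ Ann k, (Jac G (θ, η)).rank = 2 * k + 1) ∧
    (∀ τ ∈ Set.Icc (0 : ℝ) δ, ∀ θ : ℝ, ∀ η ∈ Sph k,
      G (θ, (1 + τ) • η) = F₁ (θ, (1 - τ) • η)) ∧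
    (∀ τ ∈ Set.Icc (1 - δ) (1 : ℝ), ∀ θ : ℝ, ∀ η ∈ Sph k,
      G (θ, (1 + τ) • η) = F₂ (θ, (2 - δ - τ) • η))

def i2k (k : ℕ) (p : Pt k) : Matrix (Fin (3 * k)) (Fin (2 * k + 1)) ℂ :=
  Matrix.of fun i j =>
    if (j : ℕ) = 0 then
      (if (i : ℕ) = 0 then p.1 else 0) +
      (if (i : ℕ) = 1 then ((p.2.1 : ℂ) + (p.2.2.2 : ℂ) * Complex.I) else 0) +
      (if h : 2 ≤ (i : ℕ) ∧ (i : ℕ) < k then p.2.2.1 ⟨(i : ℕ) - 2, by omega⟩ else 0)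
    else if (i : ℕ) = k + (j : ℕ) - 1 then 1 else 0

def Wst (k : ℕ) : Set (Matrix (Fin (3 * k)) (Fin (2 * k + 1)) ℂ) :=
  {A | A.conjTranspose * A = 1}

def polyHull (n : ℕ) (K : Set (Fin n → ℂ)) : Set (Fin n → ℂ) :=
  {z | ∀ P : MvPolynomial (Fin n) ℂ,
    ‖MvPolynomial.eval z P‖ ≤ sSup ((fun w => ‖MvPolynomial.eval w P‖) '' K)}

def IsPolyConvex (n : ℕ) (K : Set (Fin n → ℂ)) : Prop := polyHull n K = K

def coordOf (k : ℕ) (z : CN k) (m : ℕ) : ℂ := if h : m < 3 * k then z ⟨m, h⟩ else 0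

/-- The complex Jacobian matrix of a map `H : ℂ^{3k} → ℂ^{3k}` at a point. -/
def cJac (k : ℕ) (H : CN k → CN k) (w : CN k) : Matrix (Fin (3 * k)) (Fin (3 * k)) ℂ :=
  Matrix.of fun i j => fderiv ℂ H w (Pi.single j 1) i


-- ===== auxiliary lemmas =====

section AuxPath
open Polynomial

lemma aux_gl_path {n : ℕ} (M₀ : Matrix (Fin n) (Fin n) ℂ) (hM₀ : IsUnit M₀.det) :
    ∃ γ : Path (0:ℂ) (1:ℂ), ∀ t : unitInterval,
      IsUnit (M₀ + (γ t) • ((1 : Matrix (Fin n) (Fin n) ℂ) - M₀)) := by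
  set A : Matrix (Fin n) (Fin n) ℂ[X] :=
    M₀.map C + (X : ℂ[X]) • (((1 : Matrix (Fin n) (Fin n) ℂ) - M₀).map C) with hA
  set p : ℂ[X] := A.det with hp
  have heval : ∀ z : ℂ, p.eval z = (M₀ + z • ((1 : Matrix (Fin n) (Fin n) ℂ) - M₀)).det := by
    intro z
    have h := RingHom.map_det (evalRingHom z) A
    have hmap : A.map (evalRingHom z) = M₀ + z • ((1 : Matrix (Fin n) (Fin n) ℂ) - M₀) := by
      ext i j
      simp [hA, Matrix.map_apply, Matrix.add_apply, Matrix.smul_apply, smul_eq_mul]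
    rw [hp, show p.eval z = (evalRingHom z) A.det from rfl, h,
      show (evalRingHom z).mapMatrix A = A.map (evalRingHom z) from rfl, hmap]
  have hp1 : p.eval 1 = 1 := by
    rw [heval 1, one_smul]
    have : M₀ + ((1 : Matrix (Fin n) (Fin n) ℂ) - M₀) = 1 := by abel
    rw [this, Matrix.det_one]
  have hp0 : p.eval 0 = M₀.det := by
    rw [heval 0, zero_smul, add_zero]
  have hpne : p ≠ 0 := by
    intro h
    rw [h] at hp1
    simp at hp1
  have hs : Set.Finite {z : ℂ | p.IsRoot z} := p.finite_setOf_isRoot hpne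
  have hpc : IsPathConnected {z : ℂ | p.IsRoot z}ᶜ := by
    refine hs.countable.isPathConnected_compl_of_one_lt_rank ?_
    rw [Complex.rank_real_complex]
    norm_num
  have h0 : (0:ℂ) ∈ {z : ℂ | p.IsRoot z}ᶜ := by
    simp only [Set.mem_compl_iff, Set.mem_setOf_eq, IsRoot, hp0]
    exact hM₀.ne_zero
  have h1 : (1:ℂ) ∈ {z : ℂ | p.IsRoot z}ᶜ := by
    simp only [Set.mem_compl_iff, Set.mem_setOf_eq, IsRoot, hp1]
    exact one_ne_zero
  obtain ⟨γ, hγ⟩ := hpc.joinedIn 0 h0 1 h1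
  refine ⟨γ, fun t => ?_⟩
  have := hγ t
  simp only [Set.mem_compl_iff, Set.mem_setOf_eq, IsRoot] at this
  rw [heval] at this
  rw [Matrix.isUnit_iff_isUnit_det]
  exact isUnit_iff_ne_zero.2 this

end AuxPath

section AuxCauchy
open Metric

lemma aux_cauchy_bound {E : Type*} [NormedAddCommGroup E] [NormedSpace ℂ E] [CompleteSpace E]
    {g : ℂ → E} {r M : ℝ} (hr : 0 < r)
    (hg : DifferentiableOn ℂ g (Metric.closedBall 0 r))
    (hM : ∀ z ∈ Metric.closedBall (0:ℂ) r, ‖g z‖ ≤ M) :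
    ‖deriv g 0‖ ≤ M / r := by
  have hM0 : 0 ≤ M := le_trans (norm_nonneg _) (hM 0 (by simp [hr.le]))
  lift r to NNReal using hr.le with R hR
  have hR0 : (0:NNReal) < R := by exact_mod_cast hr
  have h := hg.hasFPowerSeriesOnBall hR0
  rw [h.hasFPowerSeriesAt.deriv]
  have h1 : ‖cauchyPowerSeries g 0 R 1 (fun _ => (1:ℂ))‖ ≤ ‖cauchyPowerSeries g 0 R 1‖ := by
    simpa using (cauchyPowerSeries g 0 R 1).le_opNorm (fun _ => (1:ℂ))
  refine h1.trans ?_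
  have h2 := norm_cauchyPowerSeries_le g 0 R 1
  have hcont : Continuous fun θ : ℝ => ‖g (circleMap 0 R θ)‖ := by
    have hc : Continuous fun θ : ℝ => g (circleMap 0 R θ) := by
      refine hg.continuousOn.comp_continuous (continuous_circleMap 0 R) fun θ => ?_
      exact Metric.sphere_subset_closedBall (circleMap_mem_sphere 0 (by exact_mod_cast hR0.le) θ)
    exact hc.norm
  have hint : (∫ θ : ℝ in (0)..2 * π, ‖g (circleMap 0 R θ)‖) ≤ 2 * π * M := by
    have := intervalIntegral.integral_mono_on (a := 0) (b := 2*π) Real.two_pi_pos.le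
      (hcont.intervalIntegrable _ _) (intervalIntegrable_const (c := M) (μ := MeasureTheory.volume))
      (fun θ _ => hM _ (Metric.sphere_subset_closedBall (circleMap_mem_sphere 0 (by exact_mod_cast hR0.le) θ)))
    simpa [mul_comm] using this
  refine h2.trans ?_
  have hrpos : (0:ℝ) < R := hr
  have : ((2 * π)⁻¹ * ∫ θ : ℝ in (0)..2 * π, ‖g (circleMap 0 R θ)‖) ≤ M := by
    rw [inv_mul_le_iff₀ (by positivity)]
    calc (∫ θ : ℝ in (0)..2 * π, ‖g (circleMap 0 R θ)‖) ≤ 2 * π * M := hint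
      _ = 2 * π * M := rfl
  have habs : |(R:ℝ)|⁻¹ ^ 1 = ((R:ℝ))⁻¹ := by
    rw [pow_one, abs_of_pos hrpos]
  rw [habs]
  rw [div_eq_mul_inv]
  exact mul_le_mul_of_nonneg_right this (by positivity)



/-- On an open set where `H` is complex differentiable, the directional derivative
`w ↦ fderiv ℂ H w v` is continuous (domain a proper space). -/
lemma aux_fderiv_continuousOn {E F' : Type*} [NormedAddCommGroup E] [NormedSpace ℂ E]
    [ProperSpace E] [NormedAddCommGroup F'] [NormedSpace ℂ F'] [CompleteSpace F']
    {H : E → F'} {U : Set E} (hU : IsOpen U) (hH : DifferentiableOn ℂ H U) (v : E) :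
    ContinuousOn (fun w => fderiv ℂ H w v) U := by
  intro w₀ hw₀
  apply ContinuousAt.continuousWithinAt
  obtain ⟨δ₀, hδ₀, hball⟩ := Metric.isOpen_iff.1 hU w₀ hw₀
  set ε : ℝ := δ₀ / 4 with hε
  have hεpos : 0 < ε := by positivity
  have hK : closedBall w₀ (2 * ε) ⊆ U := by
    refine subset_trans ?_ hball
    intro x hx
    rw [mem_closedBall] at hx
    rw [mem_ball]
    linarith
  set r : ℝ := ε / (1 + ‖v‖) with hrdef
  have hrpos : 0 < r := by positivity
  have hrv : r * ‖v‖ ≤ ε := by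
    rw [hrdef, div_mul_eq_mul_div, div_le_iff₀ (by positivity)]
    nlinarith [norm_nonneg v, hεpos.le]
  -- membership facts
  have hmem : ∀ w ∈ closedBall w₀ ε, ∀ z ∈ closedBall (0:ℂ) r, w + z • v ∈ closedBall w₀ (2 * ε) := by
    intro w hw z hz
    rw [mem_closedBall] at hw hz ⊢
    have h1 : dist (w + z • v) w₀ ≤ dist w w₀ + ‖z • v‖ := by
      calc dist (w + z • v) w₀ ≤ dist (w + z • v) w + dist w w₀ := dist_triangle _ _ _
        _ = ‖z • v‖ + dist w w₀ := by rw [dist_eq_norm]; simp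
        _ = dist w w₀ + ‖z • v‖ := by ring
    have h2 : ‖z • v‖ ≤ r * ‖v‖ := by
      rw [norm_smul]
      exact mul_le_mul_of_nonneg_right (by simpa [dist_eq_norm] using hz) (norm_nonneg v)
    linarith
  -- derivative along the line equals directional derivative
  have hderiv : ∀ w ∈ closedBall w₀ ε, deriv (fun z : ℂ => H (w + z • v)) 0 = fderiv ℂ H w v := by
    intro w hw
    have hwU : w ∈ U := hK (by simpa [mem_closedBall] using
      (mem_closedBall.1 hw).trans (by linarith))
    have hdiff : DifferentiableAt ℂ H w := hH.differentiableAt (hU.mem_nhds hwU)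
    have hline : HasDerivAt (fun z : ℂ => w + z • v) v 0 := by
      simpa using ((hasDerivAt_id (0:ℂ)).smul_const v).const_add w
    have hd2 : HasFDerivAt H (fderiv ℂ H w) (w + (0:ℂ) • v) := by
      simpa using hdiff.hasFDerivAt
    have := hd2.comp_hasDerivAt 0 hline
    exact this.deriv
  -- uniform continuity on the compact set
  have hKc : IsCompact (closedBall w₀ (2 * ε)) := isCompact_closedBall _ _
  have hHK : ContinuousOn H (closedBall w₀ (2 * ε)) := hH.continuousOn.mono hK
  have huc := hKc.uniformContinuousOn_of_continuous hHK
  rw [Metric.uniformContinuousOn_iff] at huc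
  rw [Metric.continuousAt_iff]
  intro δ hδ
  obtain ⟨δ₁, hδ₁, hδ₁prop⟩ := huc (δ * r / 2) (by positivity)
  refine ⟨min δ₁ ε, lt_min hδ₁ hεpos, ?_⟩
  intro w hw
  have hwε : w ∈ closedBall w₀ ε := by
    rw [mem_closedBall]; exact le_of_lt (lt_of_lt_of_le hw (min_le_right _ _))
  have hw₀ε : w₀ ∈ closedBall w₀ ε := mem_closedBall_self hεpos.le
  -- the difference function
  set g : ℂ → F' := fun z => H (w + z • v) - H (w₀ + z • v) with hg
  have hdiffg : DifferentiableOn ℂ g (closedBall 0 r) := by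
    intro z hz
    have h1 : DifferentiableAt ℂ (fun z : ℂ => H (w + z • v)) z := by
      refine DifferentiableAt.comp z (hH.differentiableAt (hU.mem_nhds (hK (hmem w hwε z hz)))) ?_
      exact (differentiableAt_id.smul_const v).const_add w
    have h2 : DifferentiableAt ℂ (fun z : ℂ => H (w₀ + z • v)) z := by
      refine DifferentiableAt.comp z (hH.differentiableAt (hU.mem_nhds (hK (hmem w₀ hw₀ε z hz)))) ?_
      exact (differentiableAt_id.smul_const v).const_add w₀
    exact (h1.sub h2).differentiableWithinAt
  have hbound : ∀ z ∈ closedBall (0:ℂ) r, ‖g z‖ ≤ δ * r / 2 := by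
    intro z hz
    have h1 := hmem w hwε z hz
    have h2 := hmem w₀ hw₀ε z hz
    have hd : dist (w + z • v) (w₀ + z • v) < δ₁ := by
      have : dist (w + z • v) (w₀ + z • v) = dist w w₀ := by
        simp [dist_eq_norm]
      rw [this]
      exact lt_of_lt_of_le hw (min_le_left _ _)
    have := hδ₁prop _ h1 _ h2 hd
    rw [dist_eq_norm] at this
    exact this.le
  have hder : deriv g 0 = fderiv ℂ H w v - fderiv ℂ H w₀ v := by
    have h1 : DifferentiableAt ℂ (fun z : ℂ => H (w + z • v)) 0 := by
      refine DifferentiableAt.comp 0 (hH.differentiableAt (hU.mem_nhds (hK (hmem w hwε 0 (by simp [hrpos.le]))))) ?_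
      exact (differentiableAt_id.smul_const v).const_add w
    have h2 : DifferentiableAt ℂ (fun z : ℂ => H (w₀ + z • v)) 0 := by
      refine DifferentiableAt.comp 0 (hH.differentiableAt (hU.mem_nhds (hK (hmem w₀ hw₀ε 0 (by simp [hrpos.le]))))) ?_
      exact (differentiableAt_id.smul_const v).const_add w₀
    rw [hg]
    rw [deriv_fun_sub h1 h2, hderiv w hwε, hderiv w₀ hw₀ε]
  have hcauchy := aux_cauchy_bound hrpos hdiffg hbound
  rw [hder] at hcauchy
  rw [dist_eq_norm]
  calc ‖fderiv ℂ H w v - fderiv ℂ H w₀ v‖ ≤ δ * r / 2 / r := hcauchy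
    _ = δ / 2 := by field_simp
    _ < δ := by linarith

end AuxCauchy

lemma aux_cJac_comp (k : ℕ) (g f : CN k → CN k) (w : CN k)
    (hg : DifferentiableAt ℂ g (f w)) (hf : DifferentiableAt ℂ f w) :
    cJac k (fun x => g (f x)) w = cJac k g (f w) * cJac k f w := by
  have hcomp : fderiv ℂ (fun x => g (f x)) w = (fderiv ℂ g (f w)).comp (fderiv ℂ f w) :=
    fderiv_comp w hg hf
  ext i j
  simp only [cJac, Matrix.of_apply, Matrix.mul_apply, hcomp, ContinuousLinearMap.coe_comp',
    Function.comp_apply]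
  have hv : (fderiv ℂ f w (Pi.single j 1)) =
      ∑ l, (fderiv ℂ f w (Pi.single j 1)) l • (Pi.single l 1 : CN k) := by
    ext m
    rw [Finset.sum_apply]
    simp [Pi.single_apply]
  conv_lhs => rw [hv, map_sum]
  simp only [map_smul, Finset.sum_apply, Pi.smul_apply, smul_eq_mul]
  exact Finset.sum_congr rfl fun l _ => mul_comm _ _

lemma aux_cJac_leftinv (k : ℕ) {H Hinv : CN k → CN k} {U : Set (CN k)} (hU : IsOpen U)
    (hinv : ∀ z ∈ U, Hinv (H z) = z) {w : CN k} (hw : w ∈ U)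
    (hg : DifferentiableAt ℂ Hinv (H w)) (hf : DifferentiableAt ℂ H w) :
    cJac k Hinv (H w) * cJac k H w = 1 := by
  rw [← aux_cJac_comp k Hinv H w hg hf]
  have heq : (fun x => Hinv (H x)) =ᶠ[nhds w] id := by
    filter_upwards [hU.mem_nhds hw] with z hz using hinv z hz
  ext i j
  simp only [cJac, Matrix.of_apply]
  rw [heq.fderiv_eq, fderiv_id]
  simp only [ContinuousLinearMap.coe_id', id_eq, Matrix.one_apply, Pi.single_apply]

lemma aux_rank_unit_mul {n m : ℕ} (M : Matrix (Fin n) (Fin n) ℂ) (hM : IsUnit M)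
    (A : Matrix (Fin n) (Fin m) ℂ) : (M * A).rank = A.rank := by
  refine le_antisymm (Matrix.rank_mul_le_right M A) ?_
  have hdet : IsUnit M.det := (Matrix.isUnit_iff_isUnit_det M).1 hM
  have hA : A = M⁻¹ * (M * A) := by
    rw [← Matrix.mul_assoc, Matrix.nonsing_inv_mul M hdet, Matrix.one_mul]
  calc A.rank = (M⁻¹ * (M * A)).rank := by rw [← hA]
    _ ≤ (M * A).rank := Matrix.rank_mul_le_right _ _


set_option maxHeartbeats 1000000 in
/-- let `(𝒩, F)` be a parametrized tube enclosing a curve in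
`ℂ^{3k}`, `U` an open neighborhood of the slice `F({1} × D^{2k})` (the slice
over the basepoint, `θ = 0`), and `H` a biholomorphism of `U` onto its image.
Then the slice frame map of `H ∘ F`, namely
`η ↦ D_ℂH(F(1,η)) · DF(1,η)`, is homotopic to `F̂_slice` as maps
`S^{2k-1} → V_{2k+1,3k}`. -/
theorem stmt_11 (k : ℕ) (hk : 2 ≤ k)
    (N : Set (CN k)) (F : ℝ × Pt k → CN k)
    (hF : IsAdmissibleParam k N F)
    (U : Set (CN k)) (hU : IsOpen U)
    (hUF : (fun η => F (0, η)) '' Disk k ⊆ U)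
    (H Hinv : CN k → CN k)
    (hH : DifferentiableOn ℂ H U)
    (hHim : IsOpen (H '' U))
    (hHinv : DifferentiableOn ℂ Hinv (H '' U))
    (hinv : ∀ z ∈ U, Hinv (H z) = z) :
    HtpyOn (Sph k) (Vst k)
      (fun η => cJac k H (F (0, η)) * Jac F (0, η))
      (fun η => Jac F (0, η)) := by
  classical
  obtain ⟨U₀, hU₀open, hU₀sub, hFsmooth⟩ := hF.smooth
  have h0disk : (0 : Pt k) ∈ Disk k := by
    norm_num [Disk, nsq]
  set M₀ : Matrix (Fin (3*k)) (Fin (3*k)) ℂ := cJac k H (F (0, (0:Pt k))) with hM₀def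
  have hF00U : F (0, (0:Pt k)) ∈ U := hUF ⟨0, h0disk, rfl⟩
  have hunit : ∀ w ∈ U, IsUnit (cJac k H w) := by
    intro w hw
    have hfw : DifferentiableAt ℂ H w := hH.differentiableAt (hU.mem_nhds hw)
    have hgw : DifferentiableAt ℂ Hinv (H w) :=
      hHinv.differentiableAt (hHim.mem_nhds ⟨w, hw, rfl⟩)
    exact (Matrix.isUnit_iff_isUnit_det _).2 (Matrix.isUnit_det_of_left_inverse (aux_cJac_leftinv k hU hinv hw hgw hfw))
  obtain ⟨γ, hγ⟩ := aux_gl_path M₀ ((Matrix.isUnit_iff_isUnit_det M₀).1 (hunit _ hF00U))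
  have hnsq_smul : ∀ (a : ℝ) (p : Pt k), nsq (a • p) = a^2 * nsq p := by
    intro a p
    simp only [nsq, Prod.smul_fst, Prod.smul_snd, Pi.smul_apply, norm_smul,
      Real.norm_eq_abs, smul_eq_mul, mul_pow, sq_abs, ← Finset.mul_sum]
    ring
  have hscale : ∀ (a : ℝ), 0 ≤ a → a ≤ 1 → ∀ x ∈ Sph k, a • x ∈ Disk k := by
    intro a ha0 ha1 x hx
    have hx1 : nsq x = 1 := hx
    simp only [Disk, Set.mem_setOf_eq, hnsq_smul, hx1, mul_one]
    nlinarith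
  have hSphDisk : Sph k ⊆ Disk k := fun x hx => le_of_eq hx
  set c : ℝ → ℝ := fun τ => 1 - min (2 * τ) 1 with hcdef
  have hc_mem : ∀ τ ∈ Set.Icc (0:ℝ) 1, 0 ≤ c τ ∧ c τ ≤ 1 := by
    intro τ hτ
    obtain ⟨ht0, ht1⟩ := hτ
    constructor
    · simp only [hcdef]; have := min_le_right (2*τ) 1; linarith
    · simp only [hcdef]
      have : (0:ℝ) ≤ min (2*τ) 1 := le_min (by linarith) zero_le_one
      linarith
  refine ⟨fun q => (cJac k H (F (0, (c q.1) • q.2)) + γ.extend (2 * q.1 - 1) •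
      ((1 : Matrix (Fin (3*k)) (Fin (3*k)) ℂ) - M₀)) * Jac F (0, q.2), ?_, ?_, ?_, ?_⟩
  · -- continuity
    have hfdF : ContinuousOn (fderiv ℝ F) U₀ :=
      hFsmooth.continuousOn_fderiv_of_isOpen hU₀open (by simp)
    have hFc : ContinuousOn F U₀ := hFsmooth.continuousOn
    have hcfun : Continuous c := by
      simp only [hcdef]
      exact continuous_const.sub ((continuous_const.mul continuous_id).min continuous_const)
    have hψ : Continuous (fun q : ℝ × Pt k => ((0:ℝ), c q.1 • q.2)) :=
      continuous_const.prodMk ((hcfun.comp continuous_fst).smul continuous_snd)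
    have hmapsψ : Set.MapsTo (fun q : ℝ × Pt k => ((0:ℝ), c q.1 • q.2))
        (Set.Icc (0:ℝ) 1 ×ˢ Sph k) U₀ := by
      intro q hq
      obtain ⟨h0, h1⟩ := hc_mem q.1 hq.1
      exact hU₀sub ⟨Set.mem_univ _, hscale _ h0 h1 q.2 hq.2⟩
    have hFψ : ContinuousOn (fun q : ℝ × Pt k => F (0, c q.1 • q.2))
        (Set.Icc (0:ℝ) 1 ×ˢ Sph k) := hFc.comp hψ.continuousOn hmapsψ
    have hmapsU : Set.MapsTo (fun q : ℝ × Pt k => F (0, c q.1 • q.2))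
        (Set.Icc (0:ℝ) 1 ×ˢ Sph k) U := by
      intro q hq
      obtain ⟨h0, h1⟩ := hc_mem q.1 hq.1
      exact hUF ⟨_, hscale _ h0 h1 q.2 hq.2, rfl⟩
    have hcJcont : ContinuousOn (fun w => cJac k H w) U := by
      refine continuousOn_pi.2 fun i => continuousOn_pi.2 fun j => ?_
      exact (continuous_apply i).comp_continuousOn
        (aux_fderiv_continuousOn hU hH (Pi.single j 1))
    have hterm1 : ContinuousOn (fun q : ℝ × Pt k => cJac k H (F (0, c q.1 • q.2)))
        (Set.Icc (0:ℝ) 1 ×ˢ Sph k) := hcJcont.comp hFψ hmapsU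
    have hterm2 : Continuous (fun q : ℝ × Pt k => γ.extend (2 * q.1 - 1) •
        ((1 : Matrix (Fin (3*k)) (Fin (3*k)) ℂ) - M₀)) := by
      refine Continuous.smul (f := fun q : ℝ × Pt k => γ.extend (2 * q.1 - 1)) ?_ continuous_const
      exact γ.continuous_extend.comp ((continuous_const.mul continuous_fst).sub continuous_const)
    have hJcont : ContinuousOn (fun q : ℝ × Pt k => Jac F (0, q.2))
        (Set.Icc (0:ℝ) 1 ×ˢ Sph k) := by
      have hfdF2 : ContinuousOn (fun q : ℝ × Pt k => fderiv ℝ F (0, q.2))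
          (Set.Icc (0:ℝ) 1 ×ˢ Sph k) :=
        hfdF.comp (continuous_const.prodMk continuous_snd).continuousOn
          (fun q hq => hU₀sub ⟨Set.mem_univ _, hSphDisk hq.2⟩)
      refine continuousOn_pi.2 fun i => continuousOn_pi.2 fun j => ?_
      exact ((continuous_apply i).comp
        (ContinuousLinearMap.apply ℝ (CN k) (dirVec k j)).continuous).comp_continuousOn hfdF2
    have hmul : Continuous (fun P : Matrix (Fin (3*k)) (Fin (3*k)) ℂ ×
        Matrix (Fin (3*k)) (Fin (2*k+1)) ℂ => P.1 * P.2) :=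
      continuous_fst.matrix_mul continuous_snd
    have hsum : ContinuousOn (fun q : ℝ × Pt k => cJac k H (F (0, c q.1 • q.2)) + γ.extend (2 * q.1 - 1) •
        ((1 : Matrix (Fin (3*k)) (Fin (3*k)) ℂ) - M₀)) (Set.Icc (0:ℝ) 1 ×ˢ Sph k) :=
      hterm1.add hterm2.continuousOn
    exact hmul.comp_continuousOn (hsum.prodMk hJcont)
  · -- τ = 0
    intro x hx
    have h1 : c 0 = 1 := by norm_num [hcdef]
    have h2 : γ.extend (2 * (0:ℝ) - 1) = 0 := by
      rw [show (2 * (0:ℝ) - 1) = -1 by norm_num]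
      exact Path.extend_of_le_zero γ (by norm_num)
    simp only [h1, h2, one_smul, zero_smul, add_zero]
  · -- τ = 1
    intro x hx
    have h1 : c 1 = 0 := by norm_num [hcdef]
    have h2 : γ.extend (2 * (1:ℝ) - 1) = 1 := by
      rw [show (2 * (1:ℝ) - 1) = 1 by norm_num]
      exact γ.extend_one
    simp only [h1, h2, zero_smul, one_smul]
    rw [show cJac k H (F (0, (0:Pt k))) = M₀ from hM₀def.symm]
    rw [show M₀ + ((1 : Matrix (Fin (3*k)) (Fin (3*k)) ℂ) - M₀) = 1 by abel, Matrix.one_mul]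
  · -- membership in Vst
    intro τ hτ x hx
    have hxD : x ∈ Disk k := hSphDisk hx
    have hxne : x ≠ 0 := by
      intro h
      rw [h] at hx
      have hx' : nsq (0 : Pt k) = 1 := hx
      norm_num [nsq] at hx'
    have hJrank : (Jac F (0, x)).rank = 2 * k + 1 := hF.totreal 0 x hxD hxne
    suffices hMm : IsUnit (cJac k H (F (0, c τ • x)) + γ.extend (2 * τ - 1) •
        ((1 : Matrix (Fin (3*k)) (Fin (3*k)) ℂ) - M₀)) by
      show ((cJac k H (F (0, c τ • x)) + γ.extend (2 * τ - 1) •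
        ((1 : Matrix (Fin (3*k)) (Fin (3*k)) ℂ) - M₀)) * Jac F (0, x)).rank = 2 * k + 1
      rw [aux_rank_unit_mul _ hMm _]
      exact hJrank
    rcases le_or_gt τ (1/2) with hhalf | hhalf
    · have h2 : γ.extend (2 * τ - 1) = 0 := Path.extend_of_le_zero γ (by linarith)
      rw [h2, zero_smul, add_zero]
      apply hunit
      obtain ⟨h0, h1⟩ := hc_mem τ hτ
      exact hUF ⟨_, hscale _ h0 h1 x hx, rfl⟩
    · have hc0 : c τ = 0 := by
        simp only [hcdef]
        rw [min_eq_right (by linarith)]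
        ring
      have hmem : (2 * τ - 1) ∈ Set.Icc (0:ℝ) 1 := ⟨by linarith, by linarith [hτ.2]⟩
      rw [hc0, zero_smul, Path.extend_apply γ hmem,
        show cJac k H (F (0, (0:Pt k))) = M₀ from hM₀def.symm]
      exact hγ ⟨_, hmem⟩
end
end
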